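/- If -2 ≤ λ₁ ≤ 1, -2 ≤ λ₂ ≤ 1, and -1 ≤ λ₁ + λ₂ ≤ 2, then r(t) = (1 + λ₁ + λ₂) - 2(λ₁ + 2λ₂) t + 3λ₂ t² is nonnegative for all t ∈ [0,1]. -/

import Mathlib

/-!
In the quadratic Bernstein basis of `[0, 1]`,
`r(t) = (1 + λ₁ + λ₂)(1 - t)² + 2(1 - λ₂) t(1 - t) + (1 - λ₁) t²`,
and all three coefficients are nonnegative on the parameter set.
-/

theorem bernstein_quadratic_nonneg {R : Type*} [CommRing R] [PartialOrder R] [IsOrderedRing R]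
    {a b c t : R} (ha : 0 ≤ a) (hb : 0 ≤ b) (hc : 0 ≤ c) (ht0 : 0 ≤ t) (ht1 : t ≤ 1) :
    0 ≤ a * (1 - t) ^ 2 + 2 * b * (t * (1 - t)) + c * t ^ 2 := by
  have ht1' : 0 ≤ 1 - t := sub_nonneg.2 ht1
  have hb2 : 0 ≤ 2 * b := mul_nonneg zero_le_two hb
  exact add_nonneg (add_nonneg (mul_nonneg ha (pow_nonneg ht1' 2))
    (mul_nonneg hb2 (mul_nonneg ht0 ht1'))) (mul_nonneg hc (pow_nonneg ht0 2))

theorem stmt_16_general (l1 l2 : ℝ) (h2 : l1 ≤ 1) (h4 : l2 ≤ 1)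
    (h5 : -1 ≤ l1 + l2) :
    ∀ t ∈ Set.Icc (0:ℝ) 1, 0 ≤ (1 + l1 + l2) - 2 * (l1 + 2 * l2) * t + 3 * l2 * t ^ 2 := by
  rintro t ⟨ht0, ht1⟩
  have bernstein_form : (1 + l1 + l2) - 2 * (l1 + 2 * l2) * t + 3 * l2 * t ^ 2 =
      (1 + l1 + l2) * (1 - t) ^ 2 + 2 * (1 - l2) * (t * (1 - t)) + (1 - l1) * t ^ 2 := by
    ring
  rw [bernstein_form]
  exact bernstein_quadratic_nonneg (by linarith) (by linarith) (by linarith) ht0 ht1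

theorem stmt_16 (l1 l2 : ℝ) (h1 : -2 ≤ l1) (h2 : l1 ≤ 1) (h3 : -2 ≤ l2) (h4 : l2 ≤ 1)
    (h5 : -1 ≤ l1 + l2) (h6 : l1 + l2 ≤ 2) :
    ∀ t ∈ Set.Icc (0:ℝ) 1, 0 ≤ (1 + l1 + l2) - 2 * (l1 + 2 * l2) * t + 3 * l2 * t ^ 2 :=
  stmt_16_general l1 l2 h2 h4 h5
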